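/- arXiv:2109.08530 — 11 statements merged into one kernel-verified Lean document; each statement's English description precedes it below -/
import Mathlib

section
/- The operator A_I is invertible with two-sided inverse Sio + Soi − I; that is, A_I ∘ (Sio + Soi − I) = I and (Sio + Soi − I) ∘ A_I = I. -/
/-- `A_I := Pi - Po⁺` is invertible with two-sided inverse `Sio + Soi - I`. -/
theorem first_kind_operator_inverse
    {H : Type*} [NormedAddCommGroup H] [InnerProductSpace ℂ H] [CompleteSpace H]
    (Pi Po Sio Soi : H →L[ℂ] H)
    (hPi : Pi ∘L Pi = Pi) (hPo : Po ∘L Po = Po)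
    (hSio : ∀ φ f : H, φ = Sio f ↔ (Pi φ = φ ∧ Po (φ - f) = 0))
    (hSoi : ∀ φ f : H, φ = Soi f ↔ (Po φ = φ ∧ Pi (φ - f) = 0)) :
    (Pi - (1 - Po)) ∘L (Sio + Soi - 1) = 1 ∧
      (Sio + Soi - 1) ∘L (Pi - (1 - Po)) = 1 := by
  have hPi' : ∀ x, Pi (Pi x) = Pi x := fun x => congrArg (· x) hPi
  have hPo' : ∀ x, Po (Po x) = Po x := fun x => congrArg (· x) hPo
  constructor
  · ext f
    obtain ⟨hu1, hu2⟩ := (hSio (Sio f) f).mp rfl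
    obtain ⟨hv1, hv2⟩ := (hSoi (Soi f) f).mp rfl
    have hu2' : Po (Sio f) = Po f := by
      have := hu2; rw [map_sub, sub_eq_zero] at this; exact this
    have hv2' : Pi (Soi f) = Pi f := by
      have := hv2; rw [map_sub, sub_eq_zero] at this; exact this
    simp only [ContinuousLinearMap.comp_apply, ContinuousLinearMap.sub_apply,
      ContinuousLinearMap.add_apply, ContinuousLinearMap.one_apply, map_sub, map_add,
      hu1, hv1, hu2', hv2']
    abel
  · ext f
    set g := (Pi - (1 - Po)) f with hg
    have hgval : g = Pi f + Po f - f := by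
      simp [hg, sub_add_eq_sub_sub]; abel
    have h1 : Pi f = Sio g := by
      refine (hSio (Pi f) g).mpr ⟨hPi' f, ?_⟩
      rw [hgval]
      have : Pi f - (Pi f + Po f - f) = f - Po f := by abel
      rw [this, map_sub, hPo' f, sub_self]
    have h2 : Po f = Soi g := by
      refine (hSoi (Po f) g).mpr ⟨hPo' f, ?_⟩
      rw [hgval]
      have : Po f - (Pi f + Po f - f) = f - Pi f := by abel
      rw [this, map_sub, hPi' f, sub_self]
    simp only [ContinuousLinearMap.comp_apply, ContinuousLinearMap.sub_apply,
      ContinuousLinearMap.add_apply, ContinuousLinearMap.one_apply, ← hg]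
    rw [← h1, ← h2, hgval]
    abel
end

section
/- The operator A_II is invertible with two-sided inverse I − Sio − Soi + 2·(Sio ∘ Soi); that is, A_II ∘ (I − Sio − Soi + 2·(Sio ∘ Soi)) = I and (I − Sio − Soi + 2·(Sio ∘ Soi)) ∘ A_II = I. -/
/-- `A_II := Po + Pi⁺` is invertible with two-sided inverse
`I - Sio - Soi + 2·(Sio ∘ Soi)`. -/
theorem second_kind_operator_inverse
    {H : Type*} [NormedAddCommGroup H] [InnerProductSpace ℂ H] [CompleteSpace H]
    (Pi Po Sio Soi : H →L[ℂ] H)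
    (hPi : Pi ∘L Pi = Pi) (hPo : Po ∘L Po = Po)
    (hSio : ∀ φ f : H, φ = Sio f ↔ (Pi φ = φ ∧ Po (φ - f) = 0))
    (hSoi : ∀ φ f : H, φ = Soi f ↔ (Po φ = φ ∧ Pi (φ - f) = 0)) :
    (Po + (1 - Pi)) ∘L (1 - Sio - Soi + (2 : ℂ) • (Sio ∘L Soi)) = 1 ∧
      (1 - Sio - Soi + (2 : ℂ) • (Sio ∘L Soi)) ∘L (Po + (1 - Pi)) = 1 := by
  have hPi' : ∀ x, Pi (Pi x) = Pi x := fun x => DFunLike.congr_fun hPi x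
  have hPo' : ∀ x, Po (Po x) = Po x := fun x => DFunLike.congr_fun hPo x
  have h1 : ∀ f, Pi (Sio f) = Sio f := fun f => ((hSio (Sio f) f).mp rfl).1
  have h2 : ∀ f, Po (Sio f) = Po f := by
    intro f
    have := ((hSio (Sio f) f).mp rfl).2
    rw [map_sub, sub_eq_zero] at this
    exact this
  have h3 : ∀ f, Po (Soi f) = Soi f := fun f => ((hSoi (Soi f) f).mp rfl).1
  have h4 : ∀ f, Pi (Soi f) = Pi f := by
    intro f
    have := ((hSoi (Soi f) f).mp rfl).2
    rw [map_sub, sub_eq_zero] at this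
    exact this
  set A : H →L[ℂ] H := Po + (1 - Pi) with hA
  set B : H →L[ℂ] H := 1 - Sio - Soi + (2 : ℂ) • (Sio ∘L Soi) with hB
  have hAB : A ∘L B = 1 := by
    ext x
    simp only [hA, hB, ContinuousLinearMap.comp_apply, ContinuousLinearMap.add_apply,
      ContinuousLinearMap.sub_apply, ContinuousLinearMap.smul_apply,
      ContinuousLinearMap.one_apply, map_add, map_sub, map_smul, h1, h2, h3, h4]
    module
  have hinj : ∀ x, A x = 0 → x = 0 := by
    intro x hx
    simp only [hA, ContinuousLinearMap.add_apply, ContinuousLinearMap.sub_apply,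
      ContinuousLinearMap.one_apply] at hx
    -- hx : Po x + (x - Pi x) = 0
    have hPiPo : Pi (Po x) = 0 := by
      have := congrArg Pi hx
      rw [map_add, map_sub, hPi', map_zero] at this
      simpa using this
    have hPox : Po x = 0 := by
      have : Po x = Soi 0 := (hSoi (Po x) 0).mpr ⟨hPo' x, by simpa using hPiPo⟩
      simpa using this
    have hxPi : Pi x = x := by
      rw [hPox, zero_add, sub_eq_zero] at hx
      exact hx.symm
    have : x = Sio 0 := (hSio x 0).mpr ⟨hxPi, by simpa using hPox⟩
    simpa using this
  refine ⟨hAB, ?_⟩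
  have key : A ∘L (B ∘L A - 1) = 0 := by
    rw [ContinuousLinearMap.comp_sub, ← ContinuousLinearMap.comp_assoc, hAB]
    ext y
    simp
  ext x
  have := hinj ((B ∘L A - 1) x) (by
    have := DFunLike.congr_fun key x
    simpa using this)
  have h := sub_eq_zero.mp (by simpa using this)
  simpa using h
end

section
/- If ψ, g ∈ H satisfy A_I ψ = g, then Po ψ = Soi g and Pi ψ = Sio g. -/
/-- If `A_I ψ = g` with `A_I := Pi - Po⁺`, then `Po ψ = Soi g` and
`Pi ψ = Sio g`. -/
theorem first_kind_solution_components
    {H : Type*} [NormedAddCommGroup H] [InnerProductSpace ℂ H] [CompleteSpace H]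
    (Pi Po Sio Soi : H →L[ℂ] H)
    (hPi : Pi ∘L Pi = Pi) (hPo : Po ∘L Po = Po)
    (hSio : ∀ φ f : H, φ = Sio f ↔ (Pi φ = φ ∧ Po (φ - f) = 0))
    (hSoi : ∀ φ f : H, φ = Soi f ↔ (Po φ = φ ∧ Pi (φ - f) = 0))
    (ψ g : H) (h : (Pi - (1 - Po)) ψ = g) :
    Po ψ = Soi g ∧ Pi ψ = Sio g := by
  have hg : Pi ψ - (ψ - Po ψ) = g := by simpa using h
  have hPi' : ∀ x, Pi (Pi x) = Pi x := fun x => congrFun (congrArg DFunLike.coe hPi) x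
  have hPo' : ∀ x, Po (Po x) = Po x := fun x => congrFun (congrArg DFunLike.coe hPo) x
  constructor
  · rw [hSoi]
    refine ⟨hPo' ψ, ?_⟩
    have : Po ψ - g = ψ - Pi ψ := by rw [← hg]; abel
    rw [this, map_sub, hPi' ψ, sub_self]
  · rw [hSio]
    refine ⟨hPi' ψ, ?_⟩
    have : Pi ψ - g = ψ - Po ψ := by rw [← hg]; abel
    rw [this, map_sub, hPo' ψ, sub_self]
end

section
/- If ψ, g ∈ H satisfy A_II ψ = g, then Po ψ = Soi g and Pi ψ = Sio (2·Soi g − g). -/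
/-- If `A_II ψ = g` with `A_II := Po + Pi⁺`, then `Po ψ = Soi g` and
`Pi ψ = Sio (2·Soi g - g)`. -/
theorem second_kind_solution_components
    {H : Type*} [NormedAddCommGroup H] [InnerProductSpace ℂ H] [CompleteSpace H]
    (Pi Po Sio Soi : H →L[ℂ] H)
    (hPi : Pi ∘L Pi = Pi) (hPo : Po ∘L Po = Po)
    (hSio : ∀ φ f : H, φ = Sio f ↔ (Pi φ = φ ∧ Po (φ - f) = 0))
    (hSoi : ∀ φ f : H, φ = Soi f ↔ (Po φ = φ ∧ Pi (φ - f) = 0))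
    (ψ g : H) (h : (Po + (1 - Pi)) ψ = g) :
    Po ψ = Soi g ∧ Pi ψ = Sio ((2 : ℂ) • Soi g - g) := by
  have hg : Po ψ + (ψ - Pi ψ) = g := by simpa using h
  have hPi' : Pi (Pi ψ) = Pi ψ := by
    have := congrArg (fun T => T ψ) hPi; simpa using this
  have hPo' : Po (Po ψ) = Po ψ := by
    have := congrArg (fun T => T ψ) hPo; simpa using this
  have h1 : Po ψ = Soi g := by
    rw [hSoi]
    refine ⟨hPo', ?_⟩
    have : Po ψ - g = -(ψ - Pi ψ) := by
      rw [← hg]; abel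
    rw [this]
    simp [hPi']
  refine ⟨h1, ?_⟩
  rw [hSio]
  refine ⟨hPi', ?_⟩
  have : Pi ψ - ((2 : ℂ) • Soi g - g) = ψ - Po ψ := by
    rw [← h1, ← hg, two_smul]; abel
  rw [this]
  simp [hPo']
end

section
/- The restrictions of both inverses to the range of Po coincide with the physical solution operator: (Sio + Soi − I) ∘ Po = Sio ∘ Po and (I − Sio − Soi + 2·(Sio ∘ Soi)) ∘ Po = Sio ∘ Po. (Since Sio + Soi − I = A_I⁻¹ and I − Sio − Soi + 2·(Sio ∘ Soi) = A_II⁻¹, this states A_I⁻¹ ∘ Po = A_II⁻¹ ∘ Po = Sio ∘ Po.) -/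
/-- `A_I⁻¹ ∘ Po = A_II⁻¹ ∘ Po = Sio ∘ Po`, i.e.
`(Sio + Soi - I) ∘ Po = Sio ∘ Po` and `(I - Sio - Soi + 2·(Sio ∘ Soi)) ∘ Po = Sio ∘ Po`. -/
theorem inverses_restricted_to_range_Po
    {H : Type*} [NormedAddCommGroup H] [InnerProductSpace ℂ H] [CompleteSpace H]
    (Pi Po Sio Soi : H →L[ℂ] H)
    (hPi : Pi ∘L Pi = Pi) (hPo : Po ∘L Po = Po)
    (hSio : ∀ φ f : H, φ = Sio f ↔ (Pi φ = φ ∧ Po (φ - f) = 0))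
    (hSoi : ∀ φ f : H, φ = Soi f ↔ (Po φ = φ ∧ Pi (φ - f) = 0)) :
    (Sio + Soi - 1) ∘L Po = Sio ∘L Po ∧
      (1 - Sio - Soi + (2 : ℂ) • (Sio ∘L Soi)) ∘L Po = Sio ∘L Po := by
  have key : ∀ f : H, Soi (Po f) = Po f := by
    intro f
    have h1 : Po (Po f) = Po f := by
      have := DFunLike.congr_fun hPo f; simpa using this
    exact ((hSoi (Po f) (Po f)).mpr ⟨h1, by simp⟩).symm
  constructor <;> ext f <;>
    simp [ContinuousLinearMap.comp_apply, key f, two_smul] <;> abel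
end

section
/- Both A_I and A_II map the range of Pi bijectively onto the range of Po with inverse Sio. Precisely: for every φ ∈ H with Pi φ = φ, one has Po (A_I φ) = A_I φ, Po (A_II φ) = A_II φ, Sio (A_I φ) = φ, and Sio (A_II φ) = φ; and for every g ∈ H with Po g = g, one has Pi (Sio g) = Sio g, A_I (Sio g) = g, and A_II (Sio g) = g. -/
/-- Both `A_I := Pi - Po⁺` and `A_II := Po + Pi⁺` map the range of `Pi`
bijectively onto the range of `Po` with inverse `Sio`. -/
theorem bijective_between_ranges
    {H : Type*} [NormedAddCommGroup H] [InnerProductSpace ℂ H] [CompleteSpace H]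
    (Pi Po Sio Soi : H →L[ℂ] H)
    (hPi : Pi ∘L Pi = Pi) (hPo : Po ∘L Po = Po)
    (hSio : ∀ φ f : H, φ = Sio f ↔ (Pi φ = φ ∧ Po (φ - f) = 0))
    (hSoi : ∀ φ f : H, φ = Soi f ↔ (Po φ = φ ∧ Pi (φ - f) = 0)) :
    (∀ φ : H, Pi φ = φ →
        Po ((Pi - (1 - Po)) φ) = (Pi - (1 - Po)) φ ∧
        Po ((Po + (1 - Pi)) φ) = (Po + (1 - Pi)) φ ∧
        Sio ((Pi - (1 - Po)) φ) = φ ∧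
        Sio ((Po + (1 - Pi)) φ) = φ) ∧
    (∀ g : H, Po g = g →
        Pi (Sio g) = Sio g ∧
        (Pi - (1 - Po)) (Sio g) = g ∧
        (Po + (1 - Pi)) (Sio g) = g) := by
  have hPo' : ∀ x, Po (Po x) = Po x := fun x =>
    congrFun (congrArg DFunLike.coe hPo) x
  constructor
  · intro φ hφ
    have hA1 : (Pi - (1 - Po)) φ = Po φ := by
      simp [ContinuousLinearMap.sub_apply, ContinuousLinearMap.one_apply, hφ]
    have hA2 : (Po + (1 - Pi)) φ = Po φ := by
      simp [ContinuousLinearMap.add_apply, ContinuousLinearMap.sub_apply,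
        ContinuousLinearMap.one_apply, hφ]
    have hS : φ = Sio (Po φ) := (hSio φ (Po φ)).2 ⟨hφ, by simp [hPo' φ]⟩
    exact ⟨by rw [hA1, hPo'], by rw [hA2, hPo'], by rw [hA1, ← hS],
      by rw [hA2, ← hS]⟩
  · intro g hg
    obtain ⟨h1, h2⟩ := (hSio (Sio g) g).1 rfl
    have h3 : Po (Sio g) = g := by
      have : Po (Sio g) - Po g = 0 := by rw [← map_sub]; exact h2
      rw [sub_eq_zero] at this; rw [this, hg]
    refine ⟨h1, ?_, ?_⟩ <;>
      simp [ContinuousLinearMap.sub_apply, ContinuousLinearMap.add_apply,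
        ContinuousLinearMap.one_apply, h1, h3]
end

section
/- Solutions of the augmented operator equations are given by the physical solution operator: let A_* be either A_I or A_II. If φ, g ∈ H satisfy A_* φ = g and Pi⁺ φ = 0, then g satisfies the compatibility condition Soi g = g, and φ = Sio g. -/
/-- If `A_* φ = g` and `Pi⁺ φ = 0`, where `A_*` is either `A_I` or `A_II`,
then `Soi g = g` and `φ = Sio g`. -/
theorem augmented_equation_solution
    {H : Type*} [NormedAddCommGroup H] [InnerProductSpace ℂ H] [CompleteSpace H]
    (Pi Po Sio Soi : H →L[ℂ] H)
    (hPi : Pi ∘L Pi = Pi) (hPo : Po ∘L Po = Po)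
    (hSio : ∀ φ f : H, φ = Sio f ↔ (Pi φ = φ ∧ Po (φ - f) = 0))
    (hSoi : ∀ φ f : H, φ = Soi f ↔ (Po φ = φ ∧ Pi (φ - f) = 0))
    (A : H →L[ℂ] H)
    (hA : A = Pi - (1 - Po) ∨ A = Po + (1 - Pi))
    (φ g : H) (h₁ : A φ = g) (h₂ : (1 - Pi) φ = 0) :
    Soi g = g ∧ φ = Sio g := by
  have hPiφ : Pi φ = φ := by
    have := h₂
    simp only [ContinuousLinearMap.sub_apply, ContinuousLinearMap.one_apply] at this
    linear_combination (norm := abel_nf) -this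
  have hg : g = Po φ := by
    rcases hA with rfl | rfl <;>
      simp only [ContinuousLinearMap.sub_apply, ContinuousLinearMap.add_apply,
        ContinuousLinearMap.one_apply, hPiφ] at h₁ <;>
      linear_combination (norm := abel_nf) -h₁
  have hPog : Po g = g := by
    rw [hg, ← ContinuousLinearMap.comp_apply, hPo]
  constructor
  · exact ((hSoi g g).mpr ⟨hPog, by simp⟩).symm
  · refine (hSio φ g).mpr ⟨hPiφ, ?_⟩
    rw [map_sub, hg, ← ContinuousLinearMap.comp_apply, hPo, sub_self]
end

section
/- Inf-sup stability of the augmented first-kind formulation: for every nonzero φ ∈ H there exists a nonzero pair (ψ₁, ψ₂) ∈ H × H such that |⟨A_I φ, ψ₁⟩ + ⟨Pi⁺ φ, ψ₂⟩| ≥ (1 / (√2 · max{‖Sio‖, 1})) · ‖φ‖ · √(‖ψ₁‖² + ‖ψ₂‖²). -/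
open scoped InnerProductSpace

/-!
Write `a := A_I φ` and `b := Pi⁺ φ`. Since `Pi` and `Po` are projections, `Pi φ` satisfies both
defining conditions of `Sio a`, so `‖φ‖ ≤ ‖Pi φ‖ + ‖b‖ ≤ ‖Sio‖ ‖a‖ + ‖b‖
≤ √2 · max{‖Sio‖, 1} · ‖(a, b)‖`. Testing against `(ψ₁, ψ₂) := (a, b)` itself gives
`⟨a, a⟩ + ⟨b, b⟩ = ‖(a, b)‖²`, which is the inf-sup bound.
-/

section Projections

variable {𝕜 E : Type*} [NontriviallyNormedField 𝕜] [SeminormedAddCommGroup E] [NormedSpace 𝕜 E]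

theorem apply_eq_solution_apply_of_isIdempotentElem {P Q S : E →L[𝕜] E}
    (hP : IsIdempotentElem P) (hQ : IsIdempotentElem Q)
    (hS : ∀ φ f : E, P φ = φ → Q (φ - f) = 0 → φ = S f) (φ : E) :
    P φ = S ((P - (1 - Q)) φ) := by
  have hPφ : P (P φ) = P φ := congrArg (· φ) hP
  have hQφ : Q (Q φ) = Q φ := congrArg (· φ) hQ
  refine hS _ _ hPφ ?_
  have : P φ - (P - (1 - Q)) φ = φ - Q φ := by simp
  rw [this, map_sub, hQφ, sub_self]

theorem norm_le_opNorm_mul_add_of_isIdempotentElem {P Q S : E →L[𝕜] E}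
    (hP : IsIdempotentElem P) (hQ : IsIdempotentElem Q)
    (hS : ∀ φ f : E, P φ = φ → Q (φ - f) = 0 → φ = S f) (φ : E) :
    ‖φ‖ ≤ ‖S‖ * ‖(P - (1 - Q)) φ‖ + ‖(1 - P) φ‖ :=
  calc ‖φ‖ = ‖P φ + (1 - P) φ‖ := by simp
    _ ≤ ‖P φ‖ + ‖(1 - P) φ‖ := norm_add_le _ _
    _ ≤ ‖S‖ * ‖(P - (1 - Q)) φ‖ + ‖(1 - P) φ‖ := by
      rw [apply_eq_solution_apply_of_isIdempotentElem hP hQ hS φ]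
      gcongr
      exact S.le_opNorm _

end Projections

theorem add_le_sqrt_two_mul_sqrt_sq_add_sq (x y : ℝ) : x + y ≤ √2 * √(x ^ 2 + y ^ 2) := by
  rw [← Real.sqrt_mul zero_le_two]
  apply Real.le_sqrt_of_sq_le
  nlinarith [sq_nonneg (x - y)]

theorem mul_add_le_max_mul_sqrt {c x y : ℝ} (hx : 0 ≤ x) (hy : 0 ≤ y) :
    c * x + y ≤ √2 * max c 1 * √(x ^ 2 + y ^ 2) :=
  calc c * x + y ≤ max c 1 * (x + y) := by
        nlinarith [le_max_left c 1, le_max_right c 1]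
    _ ≤ max c 1 * (√2 * √(x ^ 2 + y ^ 2)) := by
        gcongr
        exact add_le_sqrt_two_mul_sqrt_sq_add_sq x y
    _ = √2 * max c 1 * √(x ^ 2 + y ^ 2) := by ring

theorem norm_inner_self_add_inner_self {𝕜 E : Type*} [RCLike 𝕜] [SeminormedAddCommGroup E]
    [InnerProductSpace 𝕜 E] (a b : E) :
    ‖⟪a, a⟫_𝕜 + ⟪b, b⟫_𝕜‖ = ‖a‖ ^ 2 + ‖b‖ ^ 2 := by
  rw [inner_self_eq_norm_sq_to_K, inner_self_eq_norm_sq_to_K, ← RCLike.ofReal_pow,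
    ← RCLike.ofReal_pow, ← RCLike.ofReal_add, RCLike.norm_of_nonneg (by positivity)]

theorem one_div_mul_mul_sqrt_le_of_le_mul_sqrt {C r s : ℝ} (hC : 0 < C) (hs : 0 ≤ s)
    (h : r ≤ C * √s) :
    1 / C * r * √s ≤ s := by
  calc 1 / C * r * √s ≤ 1 / C * (C * √s) * √s := by gcongr
    _ = s := by field_simp; exact Real.sq_sqrt hs

theorem augmented_first_kind_inf_sup_general
    {H : Type*} [NormedAddCommGroup H] [InnerProductSpace ℂ H]
    (Pi Po Sio : H →L[ℂ] H)
    (hPi : Pi ∘L Pi = Pi) (hPo : Po ∘L Po = Po)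
    (hSio : ∀ φ f : H, φ = Sio f ↔ (Pi φ = φ ∧ Po (φ - f) = 0)) :
    ∀ φ : H, φ ≠ 0 → ∃ ψ₁ ψ₂ : H, ¬(ψ₁ = 0 ∧ ψ₂ = 0) ∧
      ‖⟪(Pi - (1 - Po)) φ, ψ₁⟫_ℂ + ⟪(1 - Pi) φ, ψ₂⟫_ℂ‖ ≥
        (1 / (Real.sqrt 2 * max ‖Sio‖ 1)) * ‖φ‖ * Real.sqrt (‖ψ₁‖ ^ 2 + ‖ψ₂‖ ^ 2) := by
  intro φ hφ
  set a := (Pi - (1 - Po)) φ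
  set b := (1 - Pi) φ
  have hbound : ‖φ‖ ≤ √2 * max ‖Sio‖ 1 * √(‖a‖ ^ 2 + ‖b‖ ^ 2) :=
    (norm_le_opNorm_mul_add_of_isIdempotentElem hPi hPo
      (fun φ f h₁ h₂ => (hSio φ f).2 ⟨h₁, h₂⟩) φ).trans
      (mul_add_le_max_mul_sqrt (norm_nonneg a) (norm_nonneg b))
  refine ⟨a, b, ?_, ?_⟩
  · rintro ⟨ha, hb⟩
    exact hφ (by simpa [ha, hb] using hbound)
  · rw [norm_inner_self_add_inner_self, ge_iff_le]
    exact one_div_mul_mul_sqrt_le_of_le_mul_sqrt (by positivity) (by positivity) hbound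

/-- Inf-sup stability of the augmented first-kind formulation: for every
nonzero `φ` there is a nonzero pair `(ψ₁, ψ₂)` with
`|⟨A_I φ, ψ₁⟩ + ⟨Pi⁺ φ, ψ₂⟩| ≥ (1/(√2·max{‖Sio‖,1}))·‖φ‖·√(‖ψ₁‖² + ‖ψ₂‖²)`. -/
theorem augmented_first_kind_inf_sup
    {H : Type*} [NormedAddCommGroup H] [InnerProductSpace ℂ H] [CompleteSpace H]
    (Pi Po Sio Soi : H →L[ℂ] H)
    (hPi : Pi ∘L Pi = Pi) (hPo : Po ∘L Po = Po)
    (hSio : ∀ φ f : H, φ = Sio f ↔ (Pi φ = φ ∧ Po (φ - f) = 0))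
    (hSoi : ∀ φ f : H, φ = Soi f ↔ (Po φ = φ ∧ Pi (φ - f) = 0)) :
    ∀ φ : H, φ ≠ 0 → ∃ ψ₁ ψ₂ : H, ¬(ψ₁ = 0 ∧ ψ₂ = 0) ∧
      ‖⟪(Pi - (1 - Po)) φ, ψ₁⟫_ℂ + ⟪(1 - Pi) φ, ψ₂⟫_ℂ‖ ≥
        (1 / (Real.sqrt 2 * max ‖Sio‖ 1)) * ‖φ‖ * Real.sqrt (‖ψ₁‖ ^ 2 + ‖ψ₂‖ ^ 2) :=
  augmented_first_kind_inf_sup_general Pi Po Sio hPi hPo hSio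
end

section
/- Inf-sup stability of the augmented second-kind formulation: for every nonzero φ ∈ H there exists a nonzero pair (ψ₁, ψ₂) ∈ H × H such that |⟨A_II φ, ψ₁⟩ + ⟨Pi⁺ φ, ψ₂⟩| ≥ (1 / (√(6 + 4√2) · max{‖Sio‖, 1})) · ‖φ‖ · √(‖ψ₁‖² + ‖ψ₂‖²). -/
open scoped InnerProductSpace

/-- Inf-sup stability of the augmented second-kind formulation: for every
nonzero `φ` there is a nonzero pair `(ψ₁, ψ₂)` with
`|⟨A_II φ, ψ₁⟩ + ⟨Pi⁺ φ, ψ₂⟩| ≥ (1/(√(6+4√2)·max{‖Sio‖,1}))·‖φ‖·√(‖ψ₁‖² + ‖ψ₂‖²)`. -/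
theorem augmented_second_kind_inf_sup
    {H : Type*} [NormedAddCommGroup H] [InnerProductSpace ℂ H] [CompleteSpace H]
    (Pi Po Sio Soi : H →L[ℂ] H)
    (hPi : Pi ∘L Pi = Pi) (hPo : Po ∘L Po = Po)
    (hSio : ∀ φ f : H, φ = Sio f ↔ (Pi φ = φ ∧ Po (φ - f) = 0))
    (hSoi : ∀ φ f : H, φ = Soi f ↔ (Po φ = φ ∧ Pi (φ - f) = 0)) :
    ∀ φ : H, φ ≠ 0 → ∃ ψ₁ ψ₂ : H, ¬(ψ₁ = 0 ∧ ψ₂ = 0) ∧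
      ‖⟪(Po + (1 - Pi)) φ, ψ₁⟫_ℂ + ⟪(1 - Pi) φ, ψ₂⟫_ℂ‖ ≥
        (1 / (Real.sqrt (6 + 4 * Real.sqrt 2) * max ‖Sio‖ 1)) * ‖φ‖ *
          Real.sqrt (‖ψ₁‖ ^ 2 + ‖ψ₂‖ ^ 2) := by
  intro φ hφ
  set g : H := (Po + (1 - Pi)) φ with hg
  set h : H := (1 - Pi) φ with hh
  set M : ℝ := max ‖Sio‖ 1 with hM
  have hM1 : (1 : ℝ) ≤ M := le_max_right _ _
  have hM0 : (0 : ℝ) < M := lt_of_lt_of_le one_pos hM1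
  have hSM : ‖Sio‖ ≤ M := le_max_left _ _
  -- key: Pi φ = Sio (g - 2 • h)
  have hkey : Pi φ = Sio (g - (2 : ℂ) • h) := by
    rw [hSio]
    constructor
    · exact DFunLike.congr_fun hPi φ
    · have h1 : Pi φ - (g - (2 : ℂ) • h) = φ - Po φ := by
        simp only [hg, hh, ContinuousLinearMap.add_apply, ContinuousLinearMap.sub_apply,
          ContinuousLinearMap.one_apply, smul_sub]
        module
      rw [h1, map_sub]
      have : Po (Po φ) = Po φ := DFunLike.congr_fun hPo φ
      rw [this, sub_self]
  -- norm bound: ‖φ‖ ≤ M‖g‖ + 3M‖h‖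
  have hφle : ‖φ‖ ≤ M * ‖g‖ + 3 * M * ‖h‖ := by
    have h1 : φ = Pi φ + h := by
      simp only [hh, ContinuousLinearMap.sub_apply, ContinuousLinearMap.one_apply]
      abel
    have h2 : ‖Pi φ‖ ≤ ‖Sio‖ * ‖g - (2 : ℂ) • h‖ := by
      rw [hkey]; exact Sio.le_opNorm _
    have h3 : ‖g - (2 : ℂ) • h‖ ≤ ‖g‖ + 2 * ‖h‖ := by
      calc ‖g - (2 : ℂ) • h‖ ≤ ‖g‖ + ‖(2 : ℂ) • h‖ := norm_sub_le _ _
        _ = ‖g‖ + 2 * ‖h‖ := by rw [norm_smul]; norm_num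
    have h4 : ‖φ‖ ≤ ‖Pi φ‖ + ‖h‖ := by
      calc ‖φ‖ = ‖Pi φ + h‖ := by rw [← h1]
        _ ≤ ‖Pi φ‖ + ‖h‖ := norm_add_le _ _
    have h5 : ‖Sio‖ * ‖g - (2 : ℂ) • h‖ ≤ M * (‖g‖ + 2 * ‖h‖) :=
      mul_le_mul hSM h3 (norm_nonneg _) hM0.le
    nlinarith [norm_nonneg h]
  refine ⟨g, h, ?_, ?_⟩
  · rintro ⟨hg0, hh0⟩
    rw [hg0, hh0] at hφle
    simp only [norm_zero, mul_zero, add_zero] at hφle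
    exact hφ (norm_le_zero_iff.mp hφle)
  -- the inequality
  have hinner : ⟪g, g⟫_ℂ + ⟪h, h⟫_ℂ = ((‖g‖ ^ 2 + ‖h‖ ^ 2 : ℝ) : ℂ) := by
    rw [inner_self_eq_norm_sq_to_K, inner_self_eq_norm_sq_to_K]
    norm_cast
  rw [ge_iff_le, hinner, Complex.norm_real, Real.norm_of_nonneg (by positivity)]
  set s : ℝ := Real.sqrt (‖g‖ ^ 2 + ‖h‖ ^ 2) with hs
  have hs0 : 0 ≤ s := Real.sqrt_nonneg _
  have hssq : s ^ 2 = ‖g‖ ^ 2 + ‖h‖ ^ 2 := Real.sq_sqrt (by positivity)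
  have hsqrt2 : (1 : ℝ) ≤ Real.sqrt 2 := by
    rw [show (1:ℝ) = Real.sqrt 1 by simp]
    exact Real.sqrt_le_sqrt (by norm_num)
  have hC : (10 : ℝ) ≤ 6 + 4 * Real.sqrt 2 := by nlinarith
  set K : ℝ := Real.sqrt (6 + 4 * Real.sqrt 2) with hK
  have hK0 : 0 < K := Real.sqrt_pos.mpr (by nlinarith)
  have hKsq : K ^ 2 = 6 + 4 * Real.sqrt 2 := Real.sq_sqrt (by nlinarith)
  -- ‖g‖ + 3‖h‖ ≤ K * s
  have habK : ‖g‖ + 3 * ‖h‖ ≤ K * s := by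
    have h1 : (‖g‖ + 3 * ‖h‖) ^ 2 ≤ (K * s) ^ 2 := by
      rw [mul_pow, hKsq, hssq]
      nlinarith [sq_nonneg (3 * ‖g‖ - ‖h‖), norm_nonneg g, norm_nonneg h, sq_nonneg ‖g‖,
        sq_nonneg ‖h‖]
    calc ‖g‖ + 3 * ‖h‖ = Real.sqrt ((‖g‖ + 3 * ‖h‖) ^ 2) := by
          rw [Real.sqrt_sq (by positivity)]
      _ ≤ Real.sqrt ((K * s) ^ 2) := Real.sqrt_le_sqrt h1
      _ = K * s := Real.sqrt_sq (by positivity)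
  have hφKs : ‖φ‖ ≤ K * M * s := by
    calc ‖φ‖ ≤ M * ‖g‖ + 3 * M * ‖h‖ := hφle
      _ = M * (‖g‖ + 3 * ‖h‖) := by ring
      _ ≤ M * (K * s) := mul_le_mul_of_nonneg_left habK hM0.le
      _ = K * M * s := by ring
  have hKM0 : (0 : ℝ) < K * M := mul_pos hK0 hM0
  calc 1 / (K * M) * ‖φ‖ * s ≤ 1 / (K * M) * (K * M * s) * s := by
        apply mul_le_mul_of_nonneg_right _ hs0
        exact mul_le_mul_of_nonneg_left hφKs (by positivity)
    _ = s ^ 2 := by field_simp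
    _ = ‖g‖ ^ 2 + ‖h‖ ^ 2 := hssq
end

section
/- The generalized first-kind operator A_gen := D⁻¹ ∘ Pi − (I − Po) ∘ D⁻¹ is invertible with two-sided inverse SioG ∘ D + D ∘ SoiG − D; that is, A_gen ∘ (SioG ∘ D + D ∘ SoiG − D) = I and (SioG ∘ D + D ∘ SoiG − D) ∘ A_gen = I. -/
/-- The generalized first-kind operator
`A_gen := D⁻¹ ∘ Pi - (I - Po) ∘ D⁻¹` is invertible with two-sided inverse
`SioG ∘ D + D ∘ SoiG - D`. -/
theorem generalized_first_kind_inverse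
    {H : Type*} [NormedAddCommGroup H] [InnerProductSpace ℂ H] [CompleteSpace H]
    (Pi Po SioG SoiG D Dinv : H →L[ℂ] H)
    (hPi : Pi ∘L Pi = Pi) (hPo : Po ∘L Po = Po)
    (hD₁ : D ∘L Dinv = 1) (hD₂ : Dinv ∘L D = 1)
    (hSioG : ∀ φ f : H, φ = SioG f ↔ (Pi φ = φ ∧ Po (Dinv (φ - f)) = 0))
    (hSoiG : ∀ φ f : H, φ = SoiG f ↔ (Po φ = φ ∧ Pi (D (φ - f)) = 0)) :
    (Dinv ∘L Pi - (1 - Po) ∘L Dinv) ∘L (SioG ∘L D + D ∘L SoiG - D) = 1 ∧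
      (SioG ∘L D + D ∘L SoiG - D) ∘L (Dinv ∘L Pi - (1 - Po) ∘L Dinv) = 1 := by
  have hPi' : ∀ x, Pi (Pi x) = Pi x := fun x => DFunLike.congr_fun hPi x
  have hPo' : ∀ x, Po (Po x) = Po x := fun x => DFunLike.congr_fun hPo x
  have hDD : ∀ x, D (Dinv x) = x := fun x => DFunLike.congr_fun hD₁ x
  have hDD' : ∀ x, Dinv (D x) = x := fun x => DFunLike.congr_fun hD₂ x
  have hS1 : ∀ f, Pi (SioG f) = SioG f ∧ Po (Dinv (SioG f - f)) = 0 :=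
    fun f => (hSioG _ f).mp rfl
  have hS2 : ∀ f, Po (SoiG f) = SoiG f ∧ Pi (D (SoiG f - f)) = 0 :=
    fun f => (hSoiG _ f).mp rfl
  constructor
  · ext f
    simp only [ContinuousLinearMap.comp_apply, ContinuousLinearMap.sub_apply,
      ContinuousLinearMap.add_apply, ContinuousLinearMap.one_apply]
    have e1 : Pi (SioG (D f) + D (SoiG f) - D f) = SioG (D f) := by
      have h := (hS2 f).2
      rw [map_sub, map_sub, sub_eq_zero] at h
      rw [map_sub, map_add, (hS1 (D f)).1, h]
      abel
    have e2 : Po (Dinv (SioG (D f) + D (SoiG f) - D f)) = SoiG f := by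
      have h := (hS1 (D f)).2
      rw [map_sub, map_sub, hDD', sub_eq_zero] at h
      rw [map_sub, map_add, hDD', map_sub, map_add, h, (hS2 f).1, hDD']
      abel
    rw [e1, e2, map_sub, map_add, hDD', hDD']
    abel
  · ext x
    simp only [ContinuousLinearMap.comp_apply, ContinuousLinearMap.sub_apply,
      ContinuousLinearMap.add_apply, ContinuousLinearMap.one_apply]
    set g : H := Dinv (Pi x) - (Dinv x - Po (Dinv x)) with hg
    have e1 : Pi x = SioG (D g) := by
      refine (hSioG (Pi x) (D g)).mpr ⟨hPi' x, ?_⟩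
      have : Dinv (Pi x - D g) = Dinv x - Po (Dinv x) := by
        rw [map_sub, hDD', hg]
        abel
      rw [this, map_sub, hPo', sub_self]
    have e2 : Po (Dinv x) = SoiG g := by
      refine (hSoiG (Po (Dinv x)) g).mpr ⟨hPo' _, ?_⟩
      have : D (Po (Dinv x) - g) = x - Pi x := by
        rw [hg]
        have : Po (Dinv x) - (Dinv (Pi x) - (Dinv x - Po (Dinv x))) = Dinv x - Dinv (Pi x) := by
          abel
        rw [this, map_sub, hDD, hDD]
      rw [this, map_sub, hPi', sub_self]
    rw [← e1, ← e2, hg, map_sub, map_sub, hDD, hDD]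
    abel
end

section
/- If ψ, g ∈ H satisfy A_gen ψ = g, where A_gen := D⁻¹ ∘ Pi − (I − Po) ∘ D⁻¹, then Po (D⁻¹ ψ) = SoiG g and Pi ψ = SioG (D g). -/
/-- If `A_gen ψ = g`, where `A_gen := D⁻¹ ∘ Pi - (I - Po) ∘ D⁻¹`,
then `Po (D⁻¹ ψ) = SoiG g` and `Pi ψ = SioG (D g)`. -/
theorem generalized_first_kind_solution_components
    {H : Type*} [NormedAddCommGroup H] [InnerProductSpace ℂ H] [CompleteSpace H]
    (Pi Po SioG SoiG D Dinv : H →L[ℂ] H)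
    (hPi : Pi ∘L Pi = Pi) (hPo : Po ∘L Po = Po)
    (hD₁ : D ∘L Dinv = 1) (hD₂ : Dinv ∘L D = 1)
    (hSioG : ∀ φ f : H, φ = SioG f ↔ (Pi φ = φ ∧ Po (Dinv (φ - f)) = 0))
    (hSoiG : ∀ φ f : H, φ = SoiG f ↔ (Po φ = φ ∧ Pi (D (φ - f)) = 0))
    (ψ g : H) (h : ((Dinv ∘L Pi - (1 - Po) ∘L Dinv : H →L[ℂ] H)) ψ = g) :
    Po (Dinv ψ) = SoiG g ∧ Pi ψ = SioG (D g) := by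
  have h' : Dinv (Pi ψ) - (Dinv ψ - Po (Dinv ψ)) = g := by
    simpa [ContinuousLinearMap.sub_apply, ContinuousLinearMap.comp_apply,
      ContinuousLinearMap.one_apply] using h
  have hPi' : ∀ x, Pi (Pi x) = Pi x := fun x => DFunLike.congr_fun hPi x
  have hPo' : ∀ x, Po (Po x) = Po x := fun x => DFunLike.congr_fun hPo x
  have hD₁' : ∀ x, D (Dinv x) = x := fun x => DFunLike.congr_fun hD₁ x
  have hD₂' : ∀ x, Dinv (D x) = x := fun x => DFunLike.congr_fun hD₂ x
  constructor
  · rw [(hSoiG _ _)]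
    refine ⟨hPo' _, ?_⟩
    have hsub : Po (Dinv ψ) - g = Dinv ψ - Dinv (Pi ψ) := by
      rw [← h']; abel
    rw [hsub, map_sub, hD₁', hD₁', map_sub, hPi', sub_self]
  · rw [(hSioG _ _)]
    refine ⟨hPi' _, ?_⟩
    have hsub : Dinv (Pi ψ - D g) = Dinv ψ - Po (Dinv ψ) := by
      rw [map_sub, hD₂', ← h']; abel
    rw [hsub, map_sub, hPo', sub_self]
end
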